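/- arXiv:2112.10772 — 2 statements merged into one kernel-verified Lean document; each statement's English description precedes it below -/
import Mathlib

section
/- Let h : ℝ → ℝ be bounded and continuous, and let g : ℝ → ℝ be a bounded, twice continuously differentiable function with g(x) − g''(x) = h(x) for all x ∈ ℝ. Then g(x) = (p*h)(x) for all x ∈ ℝ; i.e., p*h is the unique bounded classical solution of (1 − ∂ₓ²)g = h. -/
open MeasureTheory Real Set

/-- The convolution `(p*f)(x) = ∫_ℝ (1/2) e^{-|x-y|} f(y) dy` with `p(x) = (1/2)exp(-|x|)`. -/
noncomputable def pConv (f : ℝ → ℝ) (x : ℝ) : ℝ := ∫ y : ℝ, (1/2) * Real.exp (-|x - y|) * f y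

/-- `(p₊*f)(x) = (1/2)∫_{-∞}^{x} e^{y-x} f(y) dy`. -/
noncomputable def pPlus (f : ℝ → ℝ) (x : ℝ) : ℝ := (1/2) * ∫ y in Set.Iic x, Real.exp (y - x) * f y

/-- `(p₋*f)(x) = (1/2)∫_{x}^{∞} e^{x-y} f(y) dy`. -/
noncomputable def pMinus (f : ℝ → ℝ) (x : ℝ) : ℝ := (1/2) * ∫ y in Set.Ici x, Real.exp (x - y) * f y

/-! Variation of constants: `e^y (g - g')` and `-e^{-y} (g + g')` have derivatives `e^y h` and
`e^{-y} h`, so integrating over half-lines gives `2 (p₊*h) = g - g' - L e^{-x}` and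
`2 (p₋*h) = g + g' - R e^x`. Adding, `2 (g - p*h) = L e^{-x} + R e^x`, and this is bounded only
when `L = R = 0`. -/

theorem exists_setIntegral_Iic_eq_sub {F f : ℝ → ℝ} (hF : ∀ y, HasDerivAt F (f y) y)
    (hf : ∀ x, IntegrableOn f (Iic x)) : ∃ L, ∀ x, ∫ y in Iic x, f y = F x - L := by
  refine ⟨F 0 - ∫ y in Iic 0, f y, fun x => ?_⟩
  have hint : IntervalIntegrable f volume 0 x :=
    ((hf (0 ⊔ x)).mono_set fun _ hy => hy.2).intervalIntegrable
  have := intervalIntegral.integral_Iic_sub_Iic (hf 0) (hf x)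
  rw [intervalIntegral.integral_eq_sub_of_hasDerivAt (fun y _ => hF y) hint] at this
  linarith

theorem exists_setIntegral_Ici_eq_sub {F f : ℝ → ℝ} (hF : ∀ y, HasDerivAt F (f y) y)
    (hf : ∀ x, IntegrableOn f (Ici x)) : ∃ L, ∀ x, ∫ y in Ici x, f y = L - F x := by
  refine ⟨F 0 + ∫ y in Ici 0, f y, fun x => ?_⟩
  have hint : IntervalIntegrable f volume 0 x :=
    ((hf (0 ⊓ x)).mono_set fun _ hy => hy.1).intervalIntegrable
  have := intervalIntegral.integral_Ici_sub_Ici' (hf 0) (hf x)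
  rw [intervalIntegral.integral_eq_sub_of_hasDerivAt (fun y _ => hF y) hint] at this
  linarith

theorem right_eq_zero_of_forall_abs_mul_exp_neg_add_mul_exp_le {a b C : ℝ}
    (h : ∀ x, |a * exp (-x) + b * exp x| ≤ C) : b = 0 := by
  have hbound : ∀ x ≥ 0, |b| ≤ (C + |a|) * exp (-x) := by
    intro x hx
    have ha : |a * exp (-x)| ≤ |a| := by
      rw [abs_mul, abs_of_pos (exp_pos _)]
      exact mul_le_of_le_one_right (abs_nonneg a) (exp_le_one_iff.mpr (by linarith))
    have hb : |b| * exp x ≤ C + |a| := by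
      calc |b| * exp x = |(a * exp (-x) + b * exp x) - a * exp (-x)| := by
            rw [add_sub_cancel_left, abs_mul, abs_of_pos (exp_pos _)]
        _ ≤ |a * exp (-x) + b * exp x| + |a * exp (-x)| := abs_sub _ _
        _ ≤ C + |a| := add_le_add (h x) ha
    rw [exp_neg, ← div_eq_mul_inv, le_div_iff₀ (exp_pos _)]
    exact hb
  have hlim : Filter.Tendsto (fun x => (C + |a|) * exp (-x)) Filter.atTop (nhds 0) := by
    simpa using tendsto_exp_neg_atTop_nhds_zero.const_mul (C + |a|)
  exact abs_nonpos_iff.mp (ge_of_tendsto hlim (Filter.eventually_ge_atTop 0 |>.mono hbound))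

theorem eq_zero_of_forall_abs_mul_exp_neg_add_mul_exp_le {a b C : ℝ}
    (h : ∀ x, |a * exp (-x) + b * exp x| ≤ C) : a = 0 ∧ b = 0 :=
  ⟨right_eq_zero_of_forall_abs_mul_exp_neg_add_mul_exp_le (a := b) fun x => by
      simpa [add_comm] using h (-x),
    right_eq_zero_of_forall_abs_mul_exp_neg_add_mul_exp_le h⟩

section Kernel

variable {f : ℝ → ℝ} {C : ℝ}

theorem integrableOn_Iic_exp_mul_of_abs_le (hf : AEStronglyMeasurable f) (hC : ∀ y, |f y| ≤ C)
    (x : ℝ) : IntegrableOn (fun y => exp y * f y) (Iic x) :=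
  (integrableOn_exp_Iic x).mul_bdd hf.restrict (ae_of_all _ hC)

theorem integrableOn_Ici_exp_neg_mul_of_abs_le (hf : AEStronglyMeasurable f)
    (hC : ∀ y, |f y| ≤ C) (x : ℝ) : IntegrableOn (fun y => exp (-y) * f y) (Ici x) := by
  have hexp : IntegrableOn (fun y => exp (-y)) (Ici x) :=
    Iff.mpr integrableOn_Ici_iff_integrableOn_Ioi (integrableOn_exp_neg_Ioi x)
  exact hexp.mul_bdd hf.restrict (ae_of_all _ hC)

theorem pPlus_eq (f : ℝ → ℝ) (x : ℝ) :
    pPlus f x = exp (-x) / 2 * ∫ y in Iic x, exp y * f y := by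
  have hker : ∀ y, exp (y - x) * f y = exp (-x) * (exp y * f y) := fun y => by
    rw [sub_eq_add_neg, exp_add]; ring
  simp_rw [pPlus, hker, integral_const_mul]
  ring

theorem pMinus_eq (f : ℝ → ℝ) (x : ℝ) :
    pMinus f x = exp x / 2 * ∫ y in Ici x, exp (-y) * f y := by
  have hker : ∀ y, exp (x - y) * f y = exp x * (exp (-y) * f y) := fun y => by
    rw [sub_eq_add_neg, exp_add]; ring
  simp_rw [pMinus, hker, integral_const_mul]
  ring

theorem pConv_eq_pPlus_add_pMinus (hf : AEStronglyMeasurable f) (hC : ∀ y, |f y| ≤ C)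
    (x : ℝ) : pConv f x = pPlus f x + pMinus f x := by
  have hleft : EqOn (fun y => 1 / 2 * exp (-|x - y|) * f y)
      (fun y => exp (-x) / 2 * (exp y * f y)) (Iic x) := fun y hy => by
    dsimp only
    rw [abs_of_nonneg (sub_nonneg.mpr hy), neg_sub, sub_eq_add_neg, exp_add]
    ring
  have hright : EqOn (fun y => 1 / 2 * exp (-|x - y|) * f y)
      (fun y => exp x / 2 * (exp (-y) * f y)) (Ici x) := fun y hy => by
    dsimp only
    rw [abs_of_nonpos (sub_nonpos.mpr hy), neg_neg, sub_eq_add_neg, exp_add]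
    ring
  have hintl := IntegrableOn.congr_fun
    ((integrableOn_Iic_exp_mul_of_abs_le hf hC x).const_mul (exp (-x) / 2)) hleft.symm
    measurableSet_Iic
  have hintr := IntegrableOn.congr_fun
    ((integrableOn_Ici_exp_neg_mul_of_abs_le hf hC x).const_mul (exp x / 2)) hright.symm
    measurableSet_Ici
  rw [pConv, ← intervalIntegral.integral_Iic_add_Ioi hintl (hintr.mono_set Ioi_subset_Ici_self),
    ← integral_Ici_eq_integral_Ioi, setIntegral_congr_fun measurableSet_Iic hleft,
    setIntegral_congr_fun measurableSet_Ici hright, integral_const_mul, integral_const_mul,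
    pPlus_eq, pMinus_eq]

theorem abs_pPlus_le (hC : ∀ y, |f y| ≤ C) (x : ℝ) :
    |pPlus f x| ≤ C / 2 := by
  have hint : ‖∫ y in Iic x, exp y * f y‖ ≤ C * exp x :=
    calc ‖∫ y in Iic x, exp y * f y‖ ≤ ∫ y in Iic x, C * exp y :=
          norm_integral_le_of_norm_le ((integrableOn_exp_Iic x).const_mul C) <|
            ae_of_all _ fun y => by
              rw [norm_mul, norm_of_nonneg (exp_pos y).le, mul_comm, norm_eq_abs]
              exact mul_le_mul_of_nonneg_right (hC y) (exp_pos y).le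
      _ = C * exp x := by rw [integral_const_mul, integral_exp_Iic]
  rw [pPlus_eq, abs_mul, abs_of_pos (by positivity), ← norm_eq_abs]
  calc exp (-x) / 2 * ‖∫ y in Iic x, exp y * f y‖ ≤ exp (-x) / 2 * (C * exp x) := by gcongr
    _ = C / 2 := by rw [exp_neg]; field_simp

theorem abs_pMinus_le (hC : ∀ y, |f y| ≤ C) (x : ℝ) :
    |pMinus f x| ≤ C / 2 := by
  have hexp : IntegrableOn (fun y => exp (-y)) (Ici x) :=
    Iff.mpr integrableOn_Ici_iff_integrableOn_Ioi (integrableOn_exp_neg_Ioi x)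
  have hint : ‖∫ y in Ici x, exp (-y) * f y‖ ≤ C * exp (-x) :=
    calc ‖∫ y in Ici x, exp (-y) * f y‖ ≤ ∫ y in Ici x, C * exp (-y) :=
          norm_integral_le_of_norm_le (hexp.const_mul C) <|
            ae_of_all _ fun y => by
              rw [norm_mul, norm_of_nonneg (exp_pos _).le, mul_comm, norm_eq_abs]
              exact mul_le_mul_of_nonneg_right (hC y) (exp_pos _).le
      _ = C * exp (-x) := by
          rw [integral_const_mul, integral_Ici_eq_integral_Ioi, integral_exp_neg_Ioi]
  rw [pMinus_eq, abs_mul, abs_of_pos (by positivity), ← norm_eq_abs]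
  calc exp x / 2 * ‖∫ y in Ici x, exp (-y) * f y‖ ≤ exp x / 2 * (C * exp (-x)) := by gcongr
    _ = C / 2 := by rw [exp_neg]; field_simp

theorem abs_pConv_le (hf : AEStronglyMeasurable f) (hC : ∀ y, |f y| ≤ C) (x : ℝ) :
    |pConv f x| ≤ C := by
  rw [pConv_eq_pPlus_add_pMinus hf hC]
  linarith [abs_add_le (pPlus f x) (pMinus f x), abs_pPlus_le hC x, abs_pMinus_le hC x]

end Kernel

section Resolvent

variable {g h : ℝ → ℝ} {C : ℝ}

theorem hasDerivAt_exp_mul_sub_deriv (hg : Differentiable ℝ g)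
    (hg' : Differentiable ℝ (deriv g)) (y : ℝ) :
    HasDerivAt (fun y => exp y * (g y - deriv g y)) (exp y * (g y - deriv (deriv g) y)) y := by
  refine ((hasDerivAt_exp y).mul ((hg y).hasDerivAt.sub (hg' y).hasDerivAt)).congr_deriv ?_
  rw [Pi.sub_apply]
  ring

theorem hasDerivAt_neg_exp_neg_mul_add_deriv (hg : Differentiable ℝ g)
    (hg' : Differentiable ℝ (deriv g)) (y : ℝ) :
    HasDerivAt (fun y => -(exp (-y) * (g y + deriv g y)))
      (exp (-y) * (g y - deriv (deriv g) y)) y := by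
  refine ((hasDerivAt_neg y).exp.mul ((hg y).hasDerivAt.add (hg' y).hasDerivAt)).neg.congr_deriv
    ?_
  rw [Pi.add_apply]
  ring

theorem exists_two_mul_pPlus_eq (hg : Differentiable ℝ g) (hg' : Differentiable ℝ (deriv g))
    (hh : AEStronglyMeasurable h) (hC : ∀ y, |h y| ≤ C)
    (heq : ∀ x, g x - deriv (deriv g) x = h x) :
    ∃ L, ∀ x, 2 * pPlus h x = g x - deriv g x - L * exp (-x) := by
  obtain ⟨L, hL⟩ := exists_setIntegral_Iic_eq_sub
    (fun y => heq y ▸ hasDerivAt_exp_mul_sub_deriv hg hg' y)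
    (integrableOn_Iic_exp_mul_of_abs_le hh hC)
  refine ⟨L, fun x => ?_⟩
  rw [pPlus_eq, hL, exp_neg]
  field_simp

theorem exists_two_mul_pMinus_eq (hg : Differentiable ℝ g) (hg' : Differentiable ℝ (deriv g))
    (hh : AEStronglyMeasurable h) (hC : ∀ y, |h y| ≤ C)
    (heq : ∀ x, g x - deriv (deriv g) x = h x) :
    ∃ R, ∀ x, 2 * pMinus h x = g x + deriv g x - R * exp x := by
  obtain ⟨R, hR⟩ := exists_setIntegral_Ici_eq_sub
    (fun y => heq y ▸ hasDerivAt_neg_exp_neg_mul_add_deriv hg hg' y)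
    (integrableOn_Ici_exp_neg_mul_of_abs_le hh hC)
  refine ⟨-R, fun x => ?_⟩
  rw [pMinus_eq, hR, exp_neg]
  field_simp
  ring

end Resolvent

theorem stmt2 (h g : ℝ → ℝ) (hh : Continuous h) (hhb : ∃ C, ∀ x, |h x| ≤ C)
    (hgb : ∃ C, ∀ x, |g x| ≤ C) (hg : ContDiff ℝ 2 g)
    (heq : ∀ x : ℝ, g x - deriv (deriv g) x = h x) :
    ∀ x : ℝ, g x = pConv h x := by
  obtain ⟨C, hC⟩ := hhb
  obtain ⟨Cg, hCg⟩ := hgb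
  have hg1 : Differentiable ℝ g := hg.differentiable two_ne_zero
  have hg2 : Differentiable ℝ (deriv g) := hg.differentiable_deriv_two
  obtain ⟨L, hL⟩ := exists_two_mul_pPlus_eq hg1 hg2 hh.aestronglyMeasurable hC heq
  obtain ⟨R, hR⟩ := exists_two_mul_pMinus_eq hg1 hg2 hh.aestronglyMeasurable hC heq
  have hdiff : ∀ x, L * exp (-x) + R * exp x = 2 * (g x - pConv h x) := fun x => by
    rw [pConv_eq_pPlus_add_pMinus hh.aestronglyMeasurable hC]
    linarith [hL x, hR x]
  obtain ⟨rfl, rfl⟩ : L = 0 ∧ R = 0 :=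
    eq_zero_of_forall_abs_mul_exp_neg_add_mul_exp_le (C := 2 * (Cg + C)) fun x => by
      rw [hdiff, abs_mul, abs_two]
      linarith [abs_sub (g x) (pConv h x), hCg x, abs_pConv_le hh.aestronglyMeasurable hC x]
  intro x
  linarith [hdiff x]
end

section
/- Let T > 0 and let u : [0,T] × ℝ → ℝ be smooth, and suppose there is a constant C such that |∂_t^i ∂_x^j u(t,x)| ≤ C/(1 + x²) for all (t,x) ∈ [0,T] × ℝ and all 0 ≤ i ≤ 1, 0 ≤ j ≤ 3. Set m = u − u_{xx} and suppose m_t + ∂ₓ[sin(u² − u_x²)·m] = 0 on [0,T] × ℝ. Then the function t ↦ ∫_ℝ m(t,x)·u(t,x) dx is constant on [0,T]. -/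
open MeasureTheory Real Set

/-- Spatial partial derivative `∂ₓ` of a function of `(t, x)`. -/
noncomputable def pdx (f : ℝ → ℝ → ℝ) : ℝ → ℝ → ℝ := fun t x => deriv (fun y => f t y) x

/-- Time partial derivative `∂ₜ` of a function of `(t, x)`. -/
noncomputable def pdt (f : ℝ → ℝ → ℝ) : ℝ → ℝ → ℝ := fun t x => deriv (fun s => f s x) t

/-- The momentum density `m = u - u_{xx}`. -/
noncomputable def mF (u : ℝ → ℝ → ℝ) : ℝ → ℝ → ℝ := fun t x => u t x - pdx (pdx u) t x

/-- The blow-up quantity `M = cos(u² - u_x²) · m · u_x`. -/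
noncomputable def MF (u : ℝ → ℝ → ℝ) : ℝ → ℝ → ℝ :=
  fun t x => Real.cos ((u t x) ^ 2 - (pdx u t x) ^ 2) * mF u t x * pdx u t x

/-! Along a solution, the density `m u` of `H₁` obeys the local conservation law `∂ₜ (m u) = ∂ₓ G`
with `G = h1Flux u = u_{xt} u - u_x u_t - 2 sin(u² - u_x²) m u + 1 - cos(u² - u_x²)`: the equation
is used once, multiplied by `-2u`, and the `1 - cos` term absorbs `sin(u² - u_x²) ∂ₓ(u² - u_x²)`.
The decay hypotheses make `G` vanish at `±∞` and dominate `m u` and `∂ₜ (m u)` by multiples of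
`1/(1 + x²)` uniformly in `t`, so `t ↦ ∫ m u` is continuous with derivative `∫ ∂ₓ G = 0`. -/

open Filter Topology Function

section PartialDeriv

variable {g : ℝ → ℝ → ℝ}

theorem pdx_eq_fderiv (hg : Differentiable ℝ (uncurry g)) (t x : ℝ) :
    pdx g t x = fderiv ℝ (uncurry g) (t, x) (0, 1) := by
  have hline : HasDerivAt (fun y => ((t, y) : ℝ × ℝ)) (0, 1) x :=
    (hasDerivAt_const x t).prodMk (hasDerivAt_id x)
  exact ((hg (t, x)).hasFDerivAt.comp_hasDerivAt x hline).deriv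

theorem pdt_eq_fderiv (hg : Differentiable ℝ (uncurry g)) (t x : ℝ) :
    pdt g t x = fderiv ℝ (uncurry g) (t, x) (1, 0) := by
  have hline : HasDerivAt (fun s => ((s, x) : ℝ × ℝ)) (1, 0) t :=
    (hasDerivAt_id t).prodMk (hasDerivAt_const t x)
  exact ((hg (t, x)).hasFDerivAt.comp_hasDerivAt t hline).deriv

theorem hasDerivAt_pdx (hg : Differentiable ℝ (uncurry g)) (t x : ℝ) :
    HasDerivAt (fun y => g t y) (pdx g t x) x := by
  have hline : DifferentiableAt ℝ (fun y => ((t, y) : ℝ × ℝ)) x :=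
    (differentiableAt_const t).prodMk differentiableAt_fun_id
  exact ((hg (t, x)).comp x hline).hasDerivAt

theorem hasDerivAt_pdt (hg : Differentiable ℝ (uncurry g)) (t x : ℝ) :
    HasDerivAt (fun s => g s x) (pdt g t x) t := by
  have hline : DifferentiableAt ℝ (fun s => ((s, x) : ℝ × ℝ)) t :=
    differentiableAt_fun_id.prodMk (differentiableAt_const x)
  exact ((hg (t, x)).comp t hline).hasDerivAt

variable {m n : WithTop ℕ∞}

theorem contDiff_pdx (hg : ContDiff ℝ n (uncurry g)) (hmn : m + 1 ≤ n) :
    ContDiff ℝ m (uncurry (pdx g)) := by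
  have hd : Differentiable ℝ (uncurry g) := hg.differentiable (by rintro rfl; simp at hmn)
  convert (hg.fderiv_right hmn).clm_apply contDiff_const using 1
  exact funext fun p => pdx_eq_fderiv hd p.1 p.2

theorem contDiff_pdt (hg : ContDiff ℝ n (uncurry g)) (hmn : m + 1 ≤ n) :
    ContDiff ℝ m (uncurry (pdt g)) := by
  have hd : Differentiable ℝ (uncurry g) := hg.differentiable (by rintro rfl; simp at hmn)
  convert (hg.fderiv_right hmn).clm_apply contDiff_const using 1
  exact funext fun p => pdt_eq_fderiv hd p.1 p.2

theorem pdt_pdx_comm (hg : ContDiff ℝ 2 (uncurry g)) (t x : ℝ) :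
    pdt (pdx g) t x = pdx (pdt g) t x := by
  have hd : Differentiable ℝ (uncurry g) := hg.differentiable (by simp)
  have hdd : Differentiable ℝ (fderiv ℝ (uncurry g)) :=
    (hg.fderiv_right (m := 1) (by norm_num)).differentiable (by simp)
  have hpdx : uncurry (pdx g) = fun p => fderiv ℝ (uncurry g) p (0, 1) :=
    funext fun p => pdx_eq_fderiv hd p.1 p.2
  have hpdt : uncurry (pdt g) = fun p => fderiv ℝ (uncurry g) p (1, 0) :=
    funext fun p => pdt_eq_fderiv hd p.1 p.2
  rw [pdt_eq_fderiv ((contDiff_pdx hg (m := 1) (by norm_num)).differentiable (by simp)),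
    pdx_eq_fderiv ((contDiff_pdt hg (m := 1) (by norm_num)).differentiable (by simp)),
    hpdx, hpdt, fderiv_clm_apply (hdd _) (differentiableAt_const _),
    fderiv_clm_apply (hdd _) (differentiableAt_const _)]
  simpa using (hg.contDiffAt.isSymmSndFDerivAt (by simp)) (1, 0) (0, 1)

end PartialDeriv

theorem tendsto_one_add_sq_cocompact :
    Tendsto (fun x : ℝ => 1 + x ^ 2) (cocompact ℝ) atTop := by
  refine tendsto_atTop_add_const_left _ 1 ?_
  refine ((tendsto_pow_atTop two_ne_zero).comp tendsto_norm_cocompact_atTop).congr fun x => ?_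
  simp

theorem tendsto_zero_of_abs_le_div_one_add_sq {f : ℝ → ℝ} {c : ℝ}
    (hf : ∀ x, |f x| ≤ c / (1 + x ^ 2)) : Tendsto f (cocompact ℝ) (𝓝 0) :=
  squeeze_zero_norm hf (tendsto_const_nhds.div_atTop tendsto_one_add_sq_cocompact)

theorem integrable_div_one_add_sq (c : ℝ) : Integrable fun x : ℝ => c / (1 + x ^ 2) := by
  simpa [div_eq_mul_inv] using integrable_inv_one_add_sq.const_mul c

theorem abs_sub_mul_le {a b e c d : ℝ} (hd : 1 ≤ d) (ha : |a| ≤ c / d) (hb : |b| ≤ c / d)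
    (he : |e| ≤ c / d) : |(a - b) * e| ≤ 2 * c ^ 2 / d := by
  have hcd : 0 ≤ c / d := (abs_nonneg e).trans he
  have hc : 0 ≤ c := by
    rw [← div_mul_cancel₀ c (by positivity : d ≠ 0)]
    exact mul_nonneg hcd (by positivity)
  calc |(a - b) * e| = |a - b| * |e| := abs_mul _ _
    _ ≤ (c / d + c / d) * (c / d) :=
      mul_le_mul ((abs_sub a b).trans (add_le_add ha hb)) he (abs_nonneg e) (by positivity)
    _ ≤ (c / d + c / d) * c := by gcongr; exact div_le_self hc hd
    _ = 2 * c ^ 2 / d := by ring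

theorem eq_of_hasDerivAt_zero_of_continuousOn_Icc {f : ℝ → ℝ} {a b s₁ s₂ : ℝ}
    (hf : ContinuousOn f (Icc a b)) (hf' : ∀ s ∈ Ioo a b, HasDerivAt f 0 s)
    (hs₁ : s₁ ∈ Icc a b) (hs₂ : s₂ ∈ Icc a b) : f s₁ = f s₂ := by
  wlog h : s₁ < s₂ generalizing s₁ s₂
  · rcases (not_lt.1 h).lt_or_eq with h | h
    · exact (this hs₂ hs₁ h).symm
    · rw [h]
  obtain ⟨c, -, hc⟩ := exists_hasDerivAt_eq_slope f (fun _ => 0) h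
    (hf.mono (Icc_subset_Icc hs₁.1 hs₂.2))
    (fun s hs => hf' s ⟨hs₁.1.trans_lt hs.1, hs.2.trans_le hs₂.2⟩)
  rw [eq_comm, div_eq_zero_iff, sub_eq_zero, sub_eq_zero] at hc
  exact (hc.resolve_right h.ne').symm

theorem integral_eq_of_integral_pdt_eq_zero {F : ℝ → ℝ → ℝ} {bound bound' : ℝ → ℝ}
    {a b s₁ s₂ : ℝ} (hF : ContDiff ℝ 1 (uncurry F)) (hbound : Integrable bound)
    (hbound' : Integrable bound') (hF_le : ∀ s ∈ Icc a b, ∀ x, |F s x| ≤ bound x)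
    (hF'_le : ∀ s ∈ Ioo a b, ∀ x, |pdt F s x| ≤ bound' x)
    (hF'_zero : ∀ s ∈ Ioo a b, ∫ x, pdt F s x = 0)
    (hs₁ : s₁ ∈ Icc a b) (hs₂ : s₂ ∈ Icc a b) :
    ∫ x, F s₁ x = ∫ x, F s₂ x := by
  have hd : Differentiable ℝ (uncurry F) := hF.differentiable one_ne_zero
  have hcont : ∀ s, Continuous (F s) := fun s => hF.continuous.comp (.prodMk_right s)
  have hcont' : ∀ s, Continuous (pdt F s) := fun s =>
    (contDiff_pdt hF (m := 0) le_rfl).continuous.comp (.prodMk_right s)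
  refine eq_of_hasDerivAt_zero_of_continuousOn_Icc (f := fun s => ∫ x, F s x) ?_
    (fun s hs => ?_) hs₁ hs₂
  · exact continuousOn_of_dominated (fun s _ => (hcont s).aestronglyMeasurable)
      (fun s hs => ae_of_all _ (hF_le s hs)) hbound
      (ae_of_all _ fun x => (hF.continuous.comp (.prodMk_left x)).continuousOn)
  · have hderiv := (hasDerivAt_integral_of_dominated_loc_of_deriv_le (isOpen_Ioo.mem_nhds hs)
      (Eventually.of_forall fun s => (hcont s).aestronglyMeasurable)
      ((hbound.mono' (hcont s).aestronglyMeasurable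
        (ae_of_all _ (hF_le s (Ioo_subset_Icc_self hs)))))
      (hcont' s).aestronglyMeasurable
      (ae_of_all _ fun x r hr => hF'_le r hr x) hbound'
      (ae_of_all _ fun x r _ => hasDerivAt_pdt hd r x)).2
    rwa [hF'_zero s hs] at hderiv

noncomputable def h1Flux (u : ℝ → ℝ → ℝ) (t x : ℝ) : ℝ :=
  pdt (pdx u) t x * u t x - pdx u t x * pdt u t x
    - 2 * sin (u t x ^ 2 - pdx u t x ^ 2) * mF u t x * u t x
    + (1 - cos (u t x ^ 2 - pdx u t x ^ 2))

section SineMCH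

variable {u : ℝ → ℝ → ℝ}

theorem contDiff_mF {n : WithTop ℕ∞} (hu : ContDiff ℝ (n + 2) (uncurry u)) :
    ContDiff ℝ n (uncurry (mF u)) :=
  (hu.of_le le_self_add).sub
    (contDiff_pdx (contDiff_pdx hu (m := n + 1) (by rw [add_assoc]; rfl)) le_rfl)

theorem contDiff_mF_mul {n : WithTop ℕ∞} (hu : ContDiff ℝ (n + 2) (uncurry u)) :
    ContDiff ℝ n (uncurry fun s y => mF u s y * u s y) :=
  (contDiff_mF hu).mul (hu.of_le le_self_add)

theorem pdt_mF (hu : ContDiff ℝ 3 (uncurry u)) (t x : ℝ) :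
    pdt (mF u) t x = pdt u t x - pdt (pdx (pdx u)) t x :=
  ((hasDerivAt_pdt (hu.differentiable (by simp)) t x).sub
    (hasDerivAt_pdt ((contDiff_pdx (contDiff_pdx hu (m := 2) (by norm_num)) (m := 1)
      (by norm_num)).differentiable (by simp)) t x)).deriv

theorem pdt_mF_mul (hu : ContDiff ℝ 3 (uncurry u)) (t x : ℝ) :
    pdt (fun s y => mF u s y * u s y) t x = pdt (mF u) t x * u t x + mF u t x * pdt u t x :=
  ((hasDerivAt_pdt ((contDiff_mF (n := 1) hu).differentiable (by simp)) t x).mul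
    (hasDerivAt_pdt (hu.differentiable (by simp)) t x)).deriv

theorem hasDerivAt_h1Flux (hu : ContDiff ℝ 3 (uncurry u)) {t x : ℝ}
    (heq : pdt (mF u) t x
      + pdx (fun s y => sin (u s y ^ 2 - pdx u s y ^ 2) * mF u s y) t x = 0) :
    HasDerivAt (h1Flux u t) (pdt (fun s y => mF u s y * u s y) t x) x := by
  have hux : ContDiff ℝ 2 (uncurry (pdx u)) := contDiff_pdx hu (by norm_num)
  have hu' := hasDerivAt_pdx (hu.differentiable (by simp)) t x
  have hux' := hasDerivAt_pdx (hux.differentiable (by simp)) t x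
  have huxx' := hasDerivAt_pdx
    ((contDiff_pdx hux (m := 1) (by norm_num)).differentiable (by simp)) t x
  have hut' := hasDerivAt_pdx
    ((contDiff_pdt hu (m := 1) (by norm_num)).differentiable (by simp)) t x
  have hutx' := hasDerivAt_pdx
    ((contDiff_pdt hux (m := 1) (by norm_num)).differentiable (by simp)) t x
  have hw := (hu'.fun_pow 2).fun_sub (hux'.fun_pow 2)
  have hm := hu'.fun_sub huxx'
  have hflux : pdx (fun s y => sin (u s y ^ 2 - pdx u s y ^ 2) * mF u s y) t x = _ :=
    (hw.sin.fun_mul hm).deriv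
  have hG := (((hutx'.fun_mul hu').fun_sub (hux'.fun_mul hut')).fun_sub
    (((hw.sin.const_mul 2).fun_mul hm).fun_mul hu')).fun_add (hw.cos.const_sub 1)
  refine hG.congr_deriv ?_
  rw [pdt_mF hu, hflux] at heq
  rw [pdt_mF_mul hu, pdt_mF hu, ← pdt_pdx_comm hux, ← pdt_pdx_comm (hu.of_le (by norm_num))]
  dsimp only [mF]
  linear_combination (-2 * u t x) * heq

theorem tendsto_h1Flux {l : Filter ℝ} {t : ℝ} (h0 : Tendsto (u t) l (𝓝 0))
    (h1 : Tendsto (pdx u t) l (𝓝 0)) (h2 : Tendsto (pdx (pdx u) t) l (𝓝 0))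
    (ht : Tendsto (pdt u t) l (𝓝 0)) (htx : Tendsto (pdt (pdx u) t) l (𝓝 0)) :
    Tendsto (h1Flux u t) l (𝓝 0) := by
  have hw := (h0.pow 2).sub (h1.pow 2)
  have hsin := (continuous_sin.tendsto _).comp hw
  have hcos := (continuous_cos.tendsto _).comp hw
  have h := (((htx.mul h0).sub (h1.mul ht)).sub
    (((hsin.const_mul 2).mul (h0.sub h2)).mul h0)).add (hcos.const_sub 1)
  rw [show (0 : ℝ) = 0 * 0 - 0 * 0 - 2 * sin (0 ^ 2 - 0 ^ 2) * (0 - 0) * 0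
    + (1 - cos (0 ^ 2 - 0 ^ 2)) by simp]
  exact h

theorem integral_pdt_mF_mul_eq_zero (hu : ContDiff ℝ 3 (uncurry u)) {t : ℝ} {bound : ℝ → ℝ}
    (heq : ∀ x, pdt (mF u) t x
      + pdx (fun s y => sin (u s y ^ 2 - pdx u s y ^ 2) * mF u s y) t x = 0)
    (hbound : Integrable bound)
    (hle : ∀ x, |pdt (fun s y => mF u s y * u s y) t x| ≤ bound x)
    (h0 : Tendsto (u t) (cocompact ℝ) (𝓝 0)) (h1 : Tendsto (pdx u t) (cocompact ℝ) (𝓝 0))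
    (h2 : Tendsto (pdx (pdx u) t) (cocompact ℝ) (𝓝 0))
    (ht : Tendsto (pdt u t) (cocompact ℝ) (𝓝 0))
    (htx : Tendsto (pdt (pdx u) t) (cocompact ℝ) (𝓝 0)) :
    ∫ x, pdt (fun s y => mF u s y * u s y) t x = 0 := by
  have hcont : Continuous (pdt (fun s y => mF u s y * u s y) t) :=
    (contDiff_pdt (contDiff_mF_mul (n := 1) hu) (m := 0) (by simp)).continuous.comp
      (.prodMk_right t)
  have hflux := tendsto_h1Flux h0 h1 h2 ht htx
  simpa using integral_of_hasDerivAt_of_tendsto (fun x => hasDerivAt_h1Flux hu (heq x))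
    (hbound.mono' hcont.aestronglyMeasurable (ae_of_all _ hle))
    (hflux.mono_left atBot_le_cocompact) (hflux.mono_left atTop_le_cocompact)

theorem abs_pdt_mF_mul_le (hu : ContDiff ℝ 3 (uncurry u)) {t x c : ℝ}
    (hb : ∀ i ≤ 1, ∀ j ≤ 2, |(pdt^[i] (pdx^[j] u)) t x| ≤ c / (1 + x ^ 2)) :
    |pdt (fun s y => mF u s y * u s y) t x| ≤ 4 * c ^ 2 / (1 + x ^ 2) := by
  have hd : 1 ≤ 1 + x ^ 2 := le_add_of_nonneg_right (sq_nonneg x)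
  have hmt : |pdt (mF u) t x * u t x| ≤ 2 * c ^ 2 / (1 + x ^ 2) := by
    rw [pdt_mF hu]
    exact abs_sub_mul_le hd (hb 1 le_rfl 0 (by norm_num)) (hb 1 le_rfl 2 le_rfl)
      (hb 0 zero_le_one 0 (by norm_num))
  have hmut : |mF u t x * pdt u t x| ≤ 2 * c ^ 2 / (1 + x ^ 2) :=
    abs_sub_mul_le hd (hb 0 zero_le_one 0 (by norm_num)) (hb 0 zero_le_one 2 le_rfl)
      (hb 1 le_rfl 0 (by norm_num))
  rw [pdt_mF_mul hu]
  calc _ ≤ _ := abs_add_le _ _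
    _ ≤ 2 * c ^ 2 / (1 + x ^ 2) + 2 * c ^ 2 / (1 + x ^ 2) := add_le_add hmt hmut
    _ = 4 * c ^ 2 / (1 + x ^ 2) := by ring

end SineMCH

theorem stmt17_general (T : ℝ) (u : ℝ → ℝ → ℝ)
    (hu : ContDiff ℝ (⊤ : ℕ∞) (Function.uncurry u))
    (C : ℝ)
    -- decay: |∂ₜ^i ∂ₓ^j u(t,x)| ≤ C/(1 + x²) for 0 ≤ i ≤ 1, 0 ≤ j ≤ 3
    (hdecay : ∀ i ≤ 1, ∀ j ≤ 3, ∀ t ∈ Set.Icc (0 : ℝ) T, ∀ x : ℝ,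
      |(pdt^[i] (pdx^[j] u)) t x| ≤ C / (1 + x ^ 2))
    -- the sine-mCH equation m_t + ∂ₓ[sin(u² - u_x²)·m] = 0 on [0,T] × ℝ
    (heq : ∀ t ∈ Set.Icc (0 : ℝ) T, ∀ x : ℝ,
      pdt (mF u) t x
        + pdx (fun s y => Real.sin ((u s y) ^ 2 - (pdx u s y) ^ 2) * mF u s y) t x = 0) :
    ∀ t₁ ∈ Set.Icc (0 : ℝ) T, ∀ t₂ ∈ Set.Icc (0 : ℝ) T,
      ∫ x : ℝ, mF u t₁ x * u t₁ x = ∫ x : ℝ, mF u t₂ x * u t₂ x := by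
  intro t₁ ht₁ t₂ ht₂
  have hu3 : ContDiff ℝ 3 (uncurry u) := hu.of_le (WithTop.coe_le_coe.2 le_top)
  have hF : ∀ t ∈ Icc 0 T, ∀ x, |mF u t x * u t x| ≤ 2 * C ^ 2 / (1 + x ^ 2) :=
    fun t ht x => abs_sub_mul_le (le_add_of_nonneg_right (sq_nonneg x))
      (hdecay 0 zero_le_one 0 (by norm_num) t ht x) (hdecay 0 zero_le_one 2 (by norm_num) t ht x)
      (hdecay 0 zero_le_one 0 (by norm_num) t ht x)
  have hF' : ∀ t ∈ Icc 0 T, ∀ x,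
      |pdt (fun s y => mF u s y * u s y) t x| ≤ 4 * C ^ 2 / (1 + x ^ 2) :=
    fun t ht x => abs_pdt_mF_mul_le hu3 fun i hi j hj => hdecay i hi j (by omega) t ht x
  refine integral_eq_of_integral_pdt_eq_zero (contDiff_mF_mul (n := 1) hu3)
    (integrable_div_one_add_sq _) (integrable_div_one_add_sq _) hF
    (fun s hs => hF' s (Ioo_subset_Icc_self hs)) (fun s hs => ?_) ht₁ ht₂
  replace hs := Ioo_subset_Icc_self hs
  have hlim : ∀ i ≤ 1, ∀ j ≤ 3, Tendsto ((pdt^[i] (pdx^[j] u)) s) (cocompact ℝ) (𝓝 0) :=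
    fun i hi j hj => tendsto_zero_of_abs_le_div_one_add_sq (hdecay i hi j hj s hs)
  exact integral_pdt_mF_mul_eq_zero hu3 (heq s hs) (integrable_div_one_add_sq _) (hF' s hs)
    (hlim 0 zero_le_one 0 (by norm_num)) (hlim 0 zero_le_one 1 (by norm_num))
    (hlim 0 zero_le_one 2 (by norm_num)) (hlim 1 le_rfl 0 (by norm_num))
    (hlim 1 le_rfl 1 (by norm_num))

theorem stmt17 (T : ℝ) (hT : 0 < T) (u : ℝ → ℝ → ℝ)
    (hu : ContDiff ℝ (⊤ : ℕ∞) (Function.uncurry u))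
    (C : ℝ)
    -- decay: |∂ₜ^i ∂ₓ^j u(t,x)| ≤ C/(1 + x²) for 0 ≤ i ≤ 1, 0 ≤ j ≤ 3
    (hdecay : ∀ i ≤ 1, ∀ j ≤ 3, ∀ t ∈ Set.Icc (0 : ℝ) T, ∀ x : ℝ,
      |(pdt^[i] (pdx^[j] u)) t x| ≤ C / (1 + x ^ 2))
    -- the sine-mCH equation m_t + ∂ₓ[sin(u² - u_x²)·m] = 0 on [0,T] × ℝ
    (heq : ∀ t ∈ Set.Icc (0 : ℝ) T, ∀ x : ℝ,
      pdt (mF u) t x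
        + pdx (fun s y => Real.sin ((u s y) ^ 2 - (pdx u s y) ^ 2) * mF u s y) t x = 0) :
    ∀ t₁ ∈ Set.Icc (0 : ℝ) T, ∀ t₂ ∈ Set.Icc (0 : ℝ) T,
      ∫ x : ℝ, mF u t₁ x * u t₁ x = ∫ x : ℝ, mF u t₂ x * u t₂ x :=
  stmt17_general T u hu C hdecay heq
end
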